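/- Convergence of mADBCD (Theorem 3.1): Let A ∈ R^{m×n} (m ≥ n) have full column rank, b ∈ R^m, and suppose that γ₁ = 1 + 3β + 2β² − (3β+1)|τₖ|σ_min(A)²/(n σ_max(A_{τₖ})²) and γ₂ = 2β² + β satisfy γ₁ + γ₂ < 1 for all k. Then the iterates x⁽ᵏ⁾ generated by the mADBCD method from any x⁽⁰⁾ = x⁽¹⁾ satisfy ‖x⁽ᵏ⁺¹⁾ − x⋆‖²_{AᵀA} ≤ qᵏ(1 + τ)‖x⁽⁰⁾ − x⋆‖²_{AᵀA}, where q = (γ₁ + √(γ₁² + 4γ₂))/2 and τ = q − γ₁; in particular x⁽ᵏ⁾ → x⋆ = A†b. -/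

import Mathlib

open Matrix BigOperators

noncomputable def sqnorm {k : Type*} [Fintype k] (v : k → ℝ) : ℝ := ∑ i, v i ^ 2

noncomputable def enorm' {k : Type*} [Fintype k] (v : k → ℝ) : ℝ := Real.sqrt (sqnorm v)

noncomputable def sigmaMin {m n : Type*} [Fintype m] [Fintype n] (G : Matrix m n ℝ) : ℝ :=
  sInf {r | ∃ x : n → ℝ, enorm' x = 1 ∧ r = enorm' (G.mulVec x)}

noncomputable def sigmaMax {m n : Type*} [Fintype m] [Fintype n] (G : Matrix m n ℝ) : ℝ :=
  sSup {r | ∃ x : n → ℝ, enorm' x = 1 ∧ r = enorm' (G.mulVec x)}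

/-- residual of the normal equations -/
noncomputable def sVec {m n : ℕ} (A : Matrix (Fin m) (Fin n) ℝ) (b : Fin m → ℝ)
    (x : Fin n → ℝ) : Fin n → ℝ := Aᵀ.mulVec (b - A.mulVec x)

/-- the adaptive control index set -/
noncomputable def tauSet {m n : ℕ} (A : Matrix (Fin m) (Fin n) ℝ) (b : Fin m → ℝ)
    (x : Fin n → ℝ) : Finset (Fin n) :=
  Finset.univ.filter fun j => (sVec A b x j) ^ 2 ≥ sqnorm (sVec A b x) / n

/-- the search direction η -/
noncomputable def etaVec {m n : ℕ} (A : Matrix (Fin m) (Fin n) ℝ) (b : Fin m → ℝ)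
    (x : Fin n → ℝ) : Fin n → ℝ :=
  ∑ j ∈ tauSet A b x, sVec A b x j • (Pi.single j 1 : Fin n → ℝ)

/-- α = |τ| σ_min(A)² / (n σ_max(A_τ)²) -/
noncomputable def alphaVal {m n : ℕ} (A : Matrix (Fin m) (Fin n) ℝ) (b : Fin m → ℝ)
    (x : Fin n → ℝ) : ℝ :=
  ((tauSet A b x).card : ℝ) * sigmaMin A ^ 2 /
    (n * sigmaMax (A.submatrix id (fun j : ↥(tauSet A b x) => (j : Fin n))) ^ 2)

lemma sqnorm_nonneg {k : Type*} [Fintype k] (v : k → ℝ) : 0 ≤ sqnorm v :=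
  Finset.sum_nonneg fun _ _ => sq_nonneg _

lemma sqnorm_eq_dot {k : Type*} [Fintype k] (v : k → ℝ) : sqnorm v = v ⬝ᵥ v := by
  simp [sqnorm, dotProduct, sq]

lemma sqnorm_pos {k : Type*} [Fintype k] {v : k → ℝ} (hv : v ≠ 0) : 0 < sqnorm v := by
  rcases (sqnorm_nonneg v).lt_or_eq with h | h
  · exact h
  · exfalso; apply hv; funext i
    have := (Finset.sum_eq_zero_iff_of_nonneg (fun i _ => sq_nonneg (v i))).mp h.symm i
      (Finset.mem_univ i)
    exact pow_eq_zero_iff (by norm_num) |>.mp this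

lemma key_identity {k : Type*} [Fintype k] (β : ℝ) (u v w : k → ℝ)
    (huw : u ⬝ᵥ w = -(w ⬝ᵥ w)) :
    sqnorm ((1 + β) • u + w - β • v) =
      (1 + 3*β + 2*β^2) * sqnorm u + (2*β^2 + β) * sqnorm v - (3*β + 1) * sqnorm w
        - β * (β * sqnorm (u + v) + sqnorm (u + v + w)) := by
  simp only [sqnorm_eq_dot, dotProduct_add, add_dotProduct, dotProduct_sub, sub_dotProduct,
    smul_dotProduct, dotProduct_smul, smul_eq_mul]
  rw [dotProduct_comm v u, dotProduct_comm w u, dotProduct_comm w v]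
  linear_combination (2 + 4*β) * huw

lemma enorm'_nonneg {k : Type*} [Fintype k] (v : k → ℝ) : 0 ≤ enorm' v := Real.sqrt_nonneg _

lemma sq_enorm' {k : Type*} [Fintype k] (v : k → ℝ) : enorm' v ^ 2 = sqnorm v :=
  Real.sq_sqrt (sqnorm_nonneg v)

lemma sqnorm_smul {k : Type*} [Fintype k] (c : ℝ) (v : k → ℝ) :
    sqnorm (c • v) = c ^ 2 * sqnorm v := by
  simp [sqnorm, Finset.mul_sum, mul_pow]

lemma enorm'_smul {k : Type*} [Fintype k] (c : ℝ) (v : k → ℝ) :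
    enorm' (c • v) = |c| * enorm' v := by
  rw [enorm', sqnorm_smul, Real.sqrt_mul (sq_nonneg c), Real.sqrt_sq_eq_abs]; rfl

lemma enorm'_pos {k : Type*} [Fintype k] {v : k → ℝ} (hv : v ≠ 0) : 0 < enorm' v :=
  Real.sqrt_pos.mpr (sqnorm_pos hv)

-- bddAbove of the sigma set
lemma sigma_set_bddAbove {a b : Type*} [Fintype a] [Fintype b] (G : Matrix a b ℝ) :
    BddAbove {r | ∃ x : b → ℝ, enorm' x = 1 ∧ r = enorm' (G.mulVec x)} := by
  refine ⟨Real.sqrt (∑ i, ∑ j, G i j ^ 2), ?_⟩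
  rintro r ⟨x, hx, rfl⟩
  have hx2 : sqnorm x = 1 := by
    have := sq_enorm' x; rw [hx] at this; simpa using this.symm
  have h1 : sqnorm (G.mulVec x) ≤ (∑ i, ∑ j, G i j ^ 2) * sqnorm x := by
    rw [sqnorm, Finset.sum_mul]
    refine Finset.sum_le_sum fun i _ => ?_
    have := Finset.sum_mul_sq_le_sq_mul_sq Finset.univ (fun j => G i j) x
    simpa [Matrix.mulVec, dotProduct, sqnorm] using this
  rw [hx2, mul_one] at h1
  exact Real.sqrt_le_sqrt h1

lemma sigma_set_bddBelow {a b : Type*} [Fintype a] [Fintype b] (G : Matrix a b ℝ) :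
    BddBelow {r | ∃ x : b → ℝ, enorm' x = 1 ∧ r = enorm' (G.mulVec x)} :=
  ⟨0, by rintro r ⟨x, hx, rfl⟩; exact enorm'_nonneg _⟩

lemma sigmaMax_nonneg {a b : Type*} [Fintype a] [Fintype b] (G : Matrix a b ℝ) :
    0 ≤ sigmaMax G := by
  apply Real.sSup_nonneg
  rintro r ⟨x, hx, rfl⟩; exact enorm'_nonneg _

lemma sigmaMin_nonneg {a b : Type*} [Fintype a] [Fintype b] (G : Matrix a b ℝ) :
    0 ≤ sigmaMin G := by
  apply Real.sInf_nonneg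
  rintro r ⟨x, hx, rfl⟩; exact enorm'_nonneg _

lemma enorm'_mulVec_le {a b : Type*} [Fintype a] [Fintype b] (G : Matrix a b ℝ) (y : b → ℝ) :
    enorm' (G.mulVec y) ≤ sigmaMax G * enorm' y := by
  rcases eq_or_ne y 0 with rfl | hy
  · simp only [Matrix.mulVec_zero]
    have : enorm' (0 : a → ℝ) = 0 := by simp [enorm', sqnorm]
    rw [this]
    have : enorm' (0 : b → ℝ) = 0 := by simp [enorm', sqnorm]
    rw [this, mul_zero]
  · have hpos := enorm'_pos hy
    set c := (enorm' y)⁻¹ with hc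
    have hcy : enorm' (c • y) = 1 := by
      rw [enorm'_smul, abs_of_pos (inv_pos.mpr hpos), inv_mul_cancel₀ hpos.ne']
    have hmem : enorm' (G.mulVec (c • y)) ∈
        {r | ∃ x : b → ℝ, enorm' x = 1 ∧ r = enorm' (G.mulVec x)} := ⟨c • y, hcy, rfl⟩
    have hle := le_csSup (sigma_set_bddAbove G) hmem
    rw [Matrix.mulVec_smul, enorm'_smul, abs_of_pos (inv_pos.mpr hpos)] at hle
    calc enorm' (G.mulVec y) = enorm' y * ((enorm' y)⁻¹ * enorm' (G.mulVec y)) := by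
          field_simp
      _ ≤ enorm' y * sigmaMax G := by
          exact mul_le_mul_of_nonneg_left hle hpos.le
      _ = sigmaMax G * enorm' y := mul_comm _ _

lemma le_enorm'_mulVec {a b : Type*} [Fintype a] [Fintype b] (G : Matrix a b ℝ) (y : b → ℝ) :
    sigmaMin G * enorm' y ≤ enorm' (G.mulVec y) := by
  rcases eq_or_ne y 0 with rfl | hy
  · have : enorm' (0 : b → ℝ) = 0 := by simp [enorm', sqnorm]
    rw [this, mul_zero]
    exact enorm'_nonneg _
  · have hpos := enorm'_pos hy
    set c := (enorm' y)⁻¹ with hc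
    have hcy : enorm' (c • y) = 1 := by
      rw [enorm'_smul, abs_of_pos (inv_pos.mpr hpos), inv_mul_cancel₀ hpos.ne']
    have hle := csInf_le (sigma_set_bddBelow G) ⟨c • y, hcy, rfl⟩
    rw [Matrix.mulVec_smul, enorm'_smul, abs_of_pos (inv_pos.mpr hpos)] at hle
    calc sigmaMin G * enorm' y ≤ ((enorm' y)⁻¹ * enorm' (G.mulVec y)) * enorm' y := by
          exact mul_le_mul_of_nonneg_right hle hpos.le
      _ = enorm' (G.mulVec y) := by field_simp

lemma sqnorm_mulVec_le {a b : Type*} [Fintype a] [Fintype b] (G : Matrix a b ℝ) (y : b → ℝ) :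
    sqnorm (G.mulVec y) ≤ sigmaMax G ^ 2 * sqnorm y := by
  have h := enorm'_mulVec_le G y
  have := pow_le_pow_left₀ (enorm'_nonneg _) h 2
  rwa [mul_pow, sq_enorm', sq_enorm'] at this

lemma le_sqnorm_mulVec {a b : Type*} [Fintype a] [Fintype b] (G : Matrix a b ℝ) (y : b → ℝ) :
    sigmaMin G ^ 2 * sqnorm y ≤ sqnorm (G.mulVec y) := by
  have h := le_enorm'_mulVec G y
  have := pow_le_pow_left₀ (mul_nonneg (sigmaMin_nonneg G) (enorm'_nonneg y)) h 2
  rwa [mul_pow, sq_enorm', sq_enorm'] at this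

lemma sqnorm_single {k : Type*} [Fintype k] [DecidableEq k] (j : k) :
    sqnorm (Pi.single j (1 : ℝ)) = 1 := by
  simp [sqnorm, Pi.single_apply, Finset.sum_ite_eq']

lemma enorm'_single {k : Type*} [Fintype k] [DecidableEq k] (j : k) :
    enorm' (Pi.single j (1 : ℝ)) = 1 := by
  rw [enorm', sqnorm_single, Real.sqrt_one]

lemma mulVec_injective_of_rank {m n : ℕ} (A : Matrix (Fin m) (Fin n) ℝ) (hrank : A.rank = n) :
    Function.Injective A.mulVec := by
  have hker : LinearMap.ker A.mulVecLin = ⊥ := by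
    have h1 := LinearMap.finrank_range_add_finrank_ker A.mulVecLin
    rw [show Module.finrank ℝ (Fin n → ℝ) = n by simp, ← Matrix.rank, hrank] at h1
    have h2 : Module.finrank ℝ (LinearMap.ker A.mulVecLin) = 0 := by omega
    exact Submodule.finrank_eq_zero.mp h2
  intro u v huv
  have : A.mulVecLin (u - v) = 0 := by
    simp [Matrix.mulVecLin_apply, Matrix.mulVec_sub, huv]
  have := (LinearMap.mem_ker.mpr this)
  rw [hker, Submodule.mem_bot] at this
  exact sub_eq_zero.mp this

lemma sigmaMin_pos {m n : ℕ} (A : Matrix (Fin m) (Fin n) ℝ) (hrank : A.rank = n)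
    (hn : 0 < n) : 0 < sigmaMin A := by
  have hinj := mulVec_injective_of_rank A hrank
  set S : Set (Fin n → ℝ) := {x | enorm' x = 1} with hS
  have hfc : Continuous fun x : Fin n → ℝ => enorm' x := by
    unfold enorm' sqnorm
    exact Real.continuous_sqrt.comp (continuous_finset_sum _ fun i _ => (continuous_apply i).pow 2)
  have hSclosed : IsClosed S := isClosed_eq hfc continuous_const
  have hSbdd : Bornology.IsBounded S := by
    rw [Metric.isBounded_iff_subset_closedBall 0]
    refine ⟨1, fun x hx => ?_⟩
    simp only [Metric.mem_closedBall, dist_zero_right]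
    rw [pi_norm_le_iff_of_nonneg zero_le_one]
    intro i
    have hx2 : sqnorm x = 1 := by
      have : enorm' x = 1 := hx
      have h := congrArg (· ^ 2) this
      simpa [enorm', Real.sq_sqrt (sqnorm_nonneg x)] using h
    have : x i ^ 2 ≤ 1 := by
      rw [← hx2, sqnorm]
      exact Finset.single_le_sum (fun i _ => sq_nonneg (x i)) (Finset.mem_univ i)
    rw [Real.norm_eq_abs]
    nlinarith [abs_nonneg (x i), sq_abs (x i)]
  have hScompact : IsCompact S := Metric.isCompact_of_isClosed_isBounded hSclosed hSbdd
  have hf : Continuous fun x : Fin n → ℝ => enorm' (A.mulVec x) := by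
    unfold enorm' sqnorm Matrix.mulVec dotProduct
    exact Real.continuous_sqrt.comp (continuous_finset_sum _ fun i _ =>
      (continuous_finset_sum _ fun j _ => (continuous_const.mul (continuous_apply j))).pow 2)
  have himage : {r | ∃ x : Fin n → ℝ, enorm' x = 1 ∧ r = enorm' (A.mulVec x)} =
      (fun x => enorm' (A.mulVec x)) '' S := by
    ext r; constructor
    · rintro ⟨x, hx, rfl⟩; exact ⟨x, hx, rfl⟩
    · rintro ⟨x, hx, rfl⟩; exact ⟨x, hx, rfl⟩
  have hne : S.Nonempty := ⟨Pi.single ⟨0, hn⟩ 1, enorm'_single _⟩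
  have hcomp : IsCompact ((fun x => enorm' (A.mulVec x)) '' S) := hScompact.image hf
  have hmem : sInf ((fun x => enorm' (A.mulVec x)) '' S) ∈
      (fun x => enorm' (A.mulVec x)) '' S :=
    hcomp.sInf_mem (hne.image _)
  rw [sigmaMin, himage]
  obtain ⟨x, hxS, hx⟩ := hmem
  rw [← hx]
  apply enorm'_pos
  intro h0
  have : x = 0 := hinj (by rw [h0, Matrix.mulVec_zero])
  rw [this] at hxS
  have : enorm' (0 : Fin n → ℝ) = 1 := hxS
  simp [enorm', sqnorm] at this

section tau
variable {m n : ℕ} (A : Matrix (Fin m) (Fin n) ℝ) (b : Fin m → ℝ) (y : Fin n → ℝ)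

lemma etaVec_apply (i : Fin n) :
    etaVec A b y i = if i ∈ tauSet A b y then sVec A b y i else 0 := by
  simp [etaVec, Finset.sum_apply, Pi.single_apply]

lemma eta_dot : etaVec A b y ⬝ᵥ sVec A b y = ∑ j ∈ tauSet A b y, sVec A b y j ^ 2 := by
  simp only [dotProduct, etaVec_apply, ite_mul, zero_mul]
  rw [← Finset.sum_filter]
  apply Finset.sum_congr
  · simp [Finset.filter_mem_eq_inter]
  · intro j _; ring

lemma sqnorm_eta : sqnorm (etaVec A b y) = ∑ j ∈ tauSet A b y, sVec A b y j ^ 2 := by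
  simp only [sqnorm, etaVec_apply]
  have : ∀ i, (if i ∈ tauSet A b y then sVec A b y i else 0) ^ 2 =
      if i ∈ tauSet A b y then sVec A b y i ^ 2 else 0 := by
    intro i; split <;> simp
  simp only [this]
  rw [Finset.sum_ite_mem, Finset.univ_inter]

lemma A_mulVec_eta : A.mulVec (etaVec A b y) =
    (A.submatrix id (fun j : ↥(tauSet A b y) => (j : Fin n))).mulVec
      (fun j : ↥(tauSet A b y) => sVec A b y (j : Fin n)) := by
  funext i
  simp only [Matrix.mulVec, dotProduct, etaVec_apply, mul_ite, mul_zero, submatrix_apply, id_eq]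
  rw [Finset.sum_ite_mem, Finset.univ_inter]
  exact (Finset.sum_coe_sort (tauSet A b y) fun j => A i j * sVec A b y j).symm

lemma sqnorm_subtype : sqnorm (fun j : ↥(tauSet A b y) => sVec A b y (j : Fin n)) =
    ∑ j ∈ tauSet A b y, sVec A b y j ^ 2 := by
  rw [sqnorm]
  exact Finset.sum_coe_sort (tauSet A b y) fun j => sVec A b y j ^ 2

end tau

section facts
variable {m n : ℕ} (A : Matrix (Fin m) (Fin n) ℝ) (b : Fin m → ℝ) {y : Fin n → ℝ}

lemma tau_nonempty (hn : 0 < n) (hsy : sVec A b y ≠ 0) : (tauSet A b y).Nonempty := by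
  obtain ⟨j, -, hj⟩ := Finset.exists_max_image Finset.univ (fun j => sVec A b y j ^ 2)
    ⟨⟨0, hn⟩, Finset.mem_univ _⟩
  refine ⟨j, Finset.mem_filter.mpr ⟨Finset.mem_univ _, ?_⟩⟩
  have hsum : sqnorm (sVec A b y) ≤ n * sVec A b y j ^ 2 := by
    rw [sqnorm]
    calc ∑ i, sVec A b y i ^ 2 ≤ ∑ _i : Fin n, sVec A b y j ^ 2 :=
          Finset.sum_le_sum fun i _ => hj i (Finset.mem_univ i)
      _ = n * sVec A b y j ^ 2 := by simp [mul_comm]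
  rw [ge_iff_le, div_le_iff₀ (by exact_mod_cast hn)]
  linarith [hsum]

lemma S_pos (hn : 0 < n) (hsy : sVec A b y ≠ 0) :
    0 < ∑ j ∈ tauSet A b y, sVec A b y j ^ 2 := by
  obtain ⟨j, hj⟩ := tau_nonempty A b hn hsy
  have hjτ := (Finset.mem_filter.mp hj).2
  have h1 : 0 < sqnorm (sVec A b y) / n :=
    div_pos (sqnorm_pos hsy) (by exact_mod_cast hn)
  calc (0:ℝ) < sVec A b y j ^ 2 := lt_of_lt_of_le h1 hjτ
    _ ≤ ∑ j ∈ tauSet A b y, sVec A b y j ^ 2 :=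
        Finset.single_le_sum (f := fun j => sVec A b y j ^ 2) (fun i _ => sq_nonneg _) hj

lemma card_mul_le (hn : 0 < n) :
    ((tauSet A b y).card : ℝ) * sqnorm (sVec A b y) ≤
      n * ∑ j ∈ tauSet A b y, sVec A b y j ^ 2 := by
  have h1 : ∀ j ∈ tauSet A b y, sqnorm (sVec A b y) / n ≤ sVec A b y j ^ 2 := fun j hj =>
    (Finset.mem_filter.mp hj).2
  have h2 := Finset.card_nsmul_le_sum (tauSet A b y) _ _ h1
  rw [nsmul_eq_mul] at h2
  have hn' : (0:ℝ) < n := by exact_mod_cast hn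
  calc ((tauSet A b y).card : ℝ) * sqnorm (sVec A b y)
      = n * ((tauSet A b y).card * (sqnorm (sVec A b y) / n)) := by field_simp
    _ ≤ n * ∑ j ∈ tauSet A b y, sVec A b y j ^ 2 :=
        mul_le_mul_of_nonneg_left h2 hn'.le

lemma sigmaMin_le_sigmaMax_sub (hne : (tauSet A b y).Nonempty) :
    sigmaMin A ≤ sigmaMax (A.submatrix id (fun j : ↥(tauSet A b y) => (j : Fin n))) := by
  obtain ⟨j, hj⟩ := hne
  have h1 : sigmaMin A ≤ enorm' (A.mulVec (Pi.single j 1)) :=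
    csInf_le (sigma_set_bddBelow A) ⟨Pi.single j 1, enorm'_single j, rfl⟩
  have h2 : A.mulVec (Pi.single j 1) =
      (A.submatrix id (fun j : ↥(tauSet A b y) => (j : Fin n))).mulVec
        (Pi.single (⟨j, hj⟩ : ↥(tauSet A b y)) 1) := by
    funext i
    simp [Matrix.mulVec, dotProduct, Pi.single_apply, mul_ite, Finset.sum_ite_eq']
  have h3 := enorm'_mulVec_le (A.submatrix id (fun j : ↥(tauSet A b y) => (j : Fin n)))
    (Pi.single (⟨j, hj⟩ : ↥(tauSet A b y)) 1)
  rw [enorm'_single, mul_one] at h3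
  rw [h2] at h1
  exact h1.trans h3

lemma alphaVal_le_one (hrank : A.rank = n) (hn : 0 < n) (hsy : sVec A b y ≠ 0) :
    alphaVal A b y ≤ 1 := by
  have hmin := sigmaMin_pos A hrank hn
  have hle := sigmaMin_le_sigmaMax_sub A b (tau_nonempty A b hn hsy)
  have hmax : 0 < sigmaMax (A.submatrix id (fun j : ↥(tauSet A b y) => (j : Fin n))) :=
    lt_of_lt_of_le hmin hle
  rw [alphaVal, div_le_one (by positivity)]
  have hcard : ((tauSet A b y).card : ℝ) ≤ n := by
    exact_mod_cast (Finset.card_le_univ _).trans_eq (by simp)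
  exact mul_le_mul hcard (pow_le_pow_left₀ hmin.le hle 2) (by positivity) (by positivity)

end facts

lemma step_bound {m n : ℕ} (A : Matrix (Fin m) (Fin n) ℝ) (hrank : A.rank = n) (hn : 0 < n)
    (b : Fin m → ℝ) (xstar : Fin n → ℝ) (hstar : (Aᵀ * A).mulVec xstar = Aᵀ.mulVec b)
    (β : ℝ) (hβ : 0 ≤ β) (y z : Fin n → ℝ) (hsy : sVec A b y ≠ 0) :
    sqnorm (A.mulVec ((y + (etaVec A b y ⬝ᵥ sVec A b y / sqnorm (A.mulVec (etaVec A b y))) •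
        etaVec A b y + β • (y - z)) - xstar)) ≤
      (1 + 3*β + 2*β^2 - (3*β + 1) * alphaVal A b y) * sqnorm (A.mulVec (y - xstar))
      + (2*β^2 + β) * sqnorm (A.mulVec (z - xstar)) := by
  set s := sVec A b y with hs_def
  set η := etaVec A b y with hη_def
  set S := ∑ j ∈ tauSet A b y, s j ^ 2 with hS_def
  set Q := sqnorm (A.mulVec η) with hQ_def
  set lam := η ⬝ᵥ s / Q with hlam_def
  set u := A.mulVec (y - xstar) with hu_def
  set v := A.mulVec (z - xstar) with hv_def
  set w := lam • (A.mulVec η) with hw_def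
  set σmaxτ := sigmaMax (A.submatrix id (fun j : ↥(tauSet A b y) => (j : Fin n))) with hσ_def
  have hSpos : 0 < S := S_pos A b hn hsy
  have heds : η ⬝ᵥ s = S := eta_dot A b y
  have hsqη : sqnorm η = S := sqnorm_eta A b y
  -- s = -(Aᵀ *ᵥ u)
  have hs_eq : s = -(Aᵀ.mulVec u) := by
    simp only [hs_def, sVec, hu_def, Matrix.mulVec_sub, Matrix.mulVec_mulVec, ← hstar, neg_sub]
  -- Q bounds
  have hQle : Q ≤ σmaxτ ^ 2 * S := by
    rw [hQ_def, hη_def, A_mulVec_eta]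
    calc sqnorm _ ≤ σmaxτ ^ 2 * sqnorm (fun j : ↥(tauSet A b y) => s (j : Fin n)) :=
          sqnorm_mulVec_le _ _
      _ = σmaxτ ^ 2 * S := by rw [sqnorm_subtype]
  have hQpos : 0 < Q := by
    have h1 := le_sqnorm_mulVec A η
    rw [hsqη] at h1
    have h2 := sigmaMin_pos A hrank hn
    calc (0:ℝ) < sigmaMin A ^ 2 * S := by positivity
      _ ≤ Q := h1
  have hστpos : 0 < σmaxτ ^ 2 := by nlinarith
  -- u ⬝ᵥ A *ᵥ η = -S
  have huAη : u ⬝ᵥ (A.mulVec η) = -S := by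
    rw [dotProduct_mulVec, ← Matrix.mulVec_transpose]
    have : Aᵀ.mulVec u = -s := by rw [hs_eq, neg_neg]
    rw [this, neg_dotProduct, dotProduct_comm, heds]
  have huw : u ⬝ᵥ w = -(w ⬝ᵥ w) := by
    rw [hw_def, dotProduct_smul, smul_dotProduct, dotProduct_smul, huAη, smul_eq_mul,
      smul_eq_mul, smul_eq_mul, ← sqnorm_eq_dot, ← hQ_def, hlam_def, heds]
    field_simp
  have hsqw : sqnorm w = S ^ 2 / Q := by
    rw [hw_def, sqnorm_smul, ← hQ_def, hlam_def, heds]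
    field_simp
  -- σmin² * sqnorm u ≤ sqnorm s
  have hP : sigmaMin A ^ 2 * sqnorm u ≤ sqnorm s := by
    have hPe : sqnorm u = -(s ⬝ᵥ (y - xstar)) := by
      rw [sqnorm_eq_dot, hu_def, dotProduct_mulVec, ← Matrix.mulVec_transpose]
      have : Aᵀ.mulVec (A.mulVec (y - xstar)) = -s := by
        rw [hs_eq, neg_neg, hu_def]
      rw [this, neg_dotProduct]
    have hCS : (s ⬝ᵥ (y - xstar)) ^ 2 ≤ sqnorm s * sqnorm (y - xstar) := by
      rw [sqnorm, sqnorm, dotProduct]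
      exact Finset.sum_mul_sq_le_sq_mul_sq Finset.univ s (y - xstar)
    have hmin := le_sqnorm_mulVec A (y - xstar)
    rw [← hu_def] at hmin
    rcases (sqnorm_nonneg u).lt_or_eq with hPpos | hPzero
    · have h1 : sqnorm u ^ 2 ≤ sqnorm s * sqnorm (y - xstar) := by
        rw [hPe]; calc (-(s ⬝ᵥ (y - xstar))) ^ 2 = (s ⬝ᵥ (y - xstar)) ^ 2 := by ring
          _ ≤ _ := hCS
      have h2 : sigmaMin A ^ 2 * sqnorm u * sqnorm u ≤ sqnorm s * sqnorm u := by
        calc sigmaMin A ^ 2 * sqnorm u * sqnorm u = sigmaMin A ^ 2 * (sqnorm u * sqnorm u) := by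
              ring
          _ = sigmaMin A ^ 2 * sqnorm u ^ 2 := by ring
          _ ≤ sigmaMin A ^ 2 * (sqnorm s * sqnorm (y - xstar)) :=
              mul_le_mul_of_nonneg_left h1 (sq_nonneg _)
          _ = sqnorm s * (sigmaMin A ^ 2 * sqnorm (y - xstar)) := by ring
          _ ≤ sqnorm s * sqnorm u := mul_le_mul_of_nonneg_left hmin (sqnorm_nonneg s)
      exact le_of_mul_le_mul_right h2 hPpos
    · rw [← hPzero, mul_zero]; exact sqnorm_nonneg s
  -- α * sqnorm u ≤ sqnorm w
  have hαw : alphaVal A b y * sqnorm u ≤ sqnorm w := by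
    have hcard := card_mul_le A b (y := y) hn
    simp only [← hs_def, ← hS_def] at hcard
    rw [hsqw, alphaVal, ← hσ_def]
    rw [div_mul_eq_mul_div, div_le_div_iff₀ (by positivity) hQpos]
    have hc0 : (0:ℝ) ≤ ((tauSet A b y).card : ℝ) := by positivity
    calc ((tauSet A b y).card : ℝ) * sigmaMin A ^ 2 * sqnorm u * Q
        = (((tauSet A b y).card : ℝ) * (sigmaMin A ^ 2 * sqnorm u)) * Q := by ring
      _ ≤ (((tauSet A b y).card : ℝ) * sqnorm s) * Q :=
          mul_le_mul_of_nonneg_right (mul_le_mul_of_nonneg_left hP hc0) hQpos.le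
      _ ≤ ((n : ℝ) * S) * Q := mul_le_mul_of_nonneg_right hcard hQpos.le
      _ ≤ ((n : ℝ) * S) * (σmaxτ ^ 2 * S) :=
          mul_le_mul_of_nonneg_left hQle (by positivity)
      _ = S ^ 2 * ((n : ℝ) * σmaxτ ^ 2) := by ring
  -- the vector identity
  have hvec : (y + lam • η + β • (y - z)) - xstar =
      (1 + β) • (y - xstar) + lam • η - β • (z - xstar) := by
    module
  have hmv : A.mulVec ((y + lam • η + β • (y - z)) - xstar) = (1 + β) • u + w - β • v := by
    rw [hvec, Matrix.mulVec_sub, Matrix.mulVec_add, Matrix.mulVec_smul, Matrix.mulVec_smul,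
      Matrix.mulVec_smul, ← hu_def, ← hv_def, ← hw_def]
  rw [hmv, key_identity β u v w huw]
  have h30 : (0:ℝ) ≤ 3 * β + 1 := by linarith
  have h5 := mul_le_mul_of_nonneg_left hαw h30
  nlinarith [mul_nonneg hβ (mul_nonneg hβ (sqnorm_nonneg (u + v))),
    mul_nonneg hβ (sqnorm_nonneg (u + v + w))]

lemma rec_bound (F : ℕ → ℝ) (hFnn : ∀ k, 0 ≤ F k) (γ₁ γ₂ : ℝ) (hγ₁0 : 0 ≤ γ₁) (hγ₂0 : 0 ≤ γ₂)
    (h01 : F 1 = F 0) (hstep : ∀ k, 1 ≤ k → F (k + 1) ≤ γ₁ * F k + γ₂ * F (k - 1))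
    (q C : ℝ) (hq0 : 0 ≤ q) (hqq : q ^ 2 = γ₁ * q + γ₂) (hγq : γ₁ ≤ q)
    (hCdef : C = 1 + (q - γ₁)) :
    ∀ k, F (k + 1) ≤ q ^ k * C * F 0 := by
  have hC1 : 1 ≤ C := by rw [hCdef]; linarith
  have hF0 : 0 ≤ F 0 := hFnn 0
  have key : ∀ k, F (k + 1) ≤ q ^ k * C * F 0 ∧ F (k + 2) ≤ q ^ (k + 1) * C * F 0 := by
    intro k
    induction k with
    | zero =>
      constructor
      · rw [h01, pow_zero, one_mul]; nlinarith
      · have h2 := hstep 1 le_rfl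
        simp only [Nat.sub_self] at h2
        rw [h01] at h2
        have hqC : γ₁ + γ₂ ≤ q * C := by rw [hCdef]; nlinarith
        calc F 2 ≤ γ₁ * F 0 + γ₂ * F 0 := h2
          _ = (γ₁ + γ₂) * F 0 := by ring
          _ ≤ (q * C) * F 0 := mul_le_mul_of_nonneg_right hqC hF0
          _ = q ^ 1 * C * F 0 := by ring
    | succ k ih =>
      obtain ⟨ih1, ih2⟩ := ih
      refine ⟨ih2, ?_⟩
      have h3 := hstep (k + 2) (by omega)
      have hidx : (k + 2) - 1 = k + 1 := by omega
      rw [hidx] at h3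
      calc F (k + 3) ≤ γ₁ * F (k + 2) + γ₂ * F (k + 1) := h3
        _ ≤ γ₁ * (q ^ (k + 1) * C * F 0) + γ₂ * (q ^ k * C * F 0) := by
            exact add_le_add (mul_le_mul_of_nonneg_left ih2 hγ₁0)
              (mul_le_mul_of_nonneg_left ih1 hγ₂0)
        _ = q ^ k * (γ₁ * q + γ₂) * C * F 0 := by ring
        _ = q ^ (k + 2) * C * F 0 := by rw [← hqq]; ring
  exact fun k => (key k).1

theorem stmt_15 {m n : ℕ} (A : Matrix (Fin m) (Fin n) ℝ) (hrank : A.rank = n)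
    (b : Fin m → ℝ) (xstar : Fin n → ℝ)
    (hstar : (Aᵀ * A).mulVec xstar = Aᵀ.mulVec b)
    (β : ℝ) (hβ : 0 ≤ β) (x : ℕ → Fin n → ℝ) (h01 : x 1 = x 0)
    (hs : ∀ k ≥ 1, sVec A b (x k) ≠ 0)
    (hrec : ∀ k ≥ 1, x (k + 1) =
      x k + (etaVec A b (x k) ⬝ᵥ sVec A b (x k) / sqnorm (A.mulVec (etaVec A b (x k)))) •
        etaVec A b (x k) + β • (x k - x (k - 1)))
    (γ₁ : ℝ)
    (hγ₁ : ∀ k ≥ 1, 1 + 3 * β + 2 * β ^ 2 - (3 * β + 1) * alphaVal A b (x k) ≤ γ₁)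
    (hsum : γ₁ + (2 * β ^ 2 + β) < 1) :
    (∀ k : ℕ, sqnorm (A.mulVec (x (k + 1) - xstar)) ≤
        ((γ₁ + Real.sqrt (γ₁ ^ 2 + 4 * (2 * β ^ 2 + β))) / 2) ^ k *
          (1 + ((γ₁ + Real.sqrt (γ₁ ^ 2 + 4 * (2 * β ^ 2 + β))) / 2 - γ₁)) *
          sqnorm (A.mulVec (x 0 - xstar))) ∧
    Filter.Tendsto x Filter.atTop (nhds xstar) := by
  rcases Nat.eq_zero_or_pos n with hn0 | hn
  · exfalso
    apply hs 1 le_rfl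
    funext i
    exact absurd i.isLt (by omega)
  -- main case
  set sD := Real.sqrt (γ₁ ^ 2 + 4 * (2 * β ^ 2 + β)) with hsD_def
  set q := (γ₁ + sD) / 2 with hq_def
  set C := 1 + (q - γ₁) with hC_def
  set F : ℕ → ℝ := fun k => sqnorm (A.mulVec (x k - xstar)) with hF_def
  have hγ₂0 : (0:ℝ) ≤ 2 * β ^ 2 + β := by positivity
  have hD0 : (0:ℝ) ≤ γ₁ ^ 2 + 4 * (2 * β ^ 2 + β) := by positivity
  have hsD2 : sD ^ 2 = γ₁ ^ 2 + 4 * (2 * β ^ 2 + β) := Real.sq_sqrt hD0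
  have habsle : |γ₁| ≤ sD := by
    have h1 : Real.sqrt (γ₁ ^ 2) ≤ sD := Real.sqrt_le_sqrt (by nlinarith)
    rwa [Real.sqrt_sq_eq_abs] at h1
  have hsDγ : γ₁ ≤ sD := (le_abs_self γ₁).trans habsle
  have hsD0 : 0 ≤ sD := Real.sqrt_nonneg _
  have hq0 : 0 ≤ q := by
    rw [hq_def]
    linarith [(neg_abs_le γ₁).trans (le_abs_self γ₁), neg_le_abs γ₁, habsle]
  have hγq : γ₁ ≤ q := by rw [hq_def]; linarith
  have hqq : q ^ 2 = γ₁ * q + (2 * β ^ 2 + β) := by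
    rw [hq_def]
    field_simp
    nlinarith [hsD2]
  -- γ₁ ≥ 0
  have hγ₁0 : 0 ≤ γ₁ := by
    have hα1 := alphaVal_le_one A b hrank hn (hs 1 le_rfl)
    have hγ := hγ₁ 1 le_rfl
    nlinarith [mul_le_mul_of_nonneg_left hα1 (show (0:ℝ) ≤ 3 * β + 1 by linarith)]
  -- the recurrence
  have hFnn : ∀ k, 0 ≤ F k := fun k => sqnorm_nonneg _
  have hF01 : F 1 = F 0 := by rw [hF_def]; simp only [h01]
  have hstep : ∀ k, 1 ≤ k → F (k + 1) ≤ γ₁ * F k + (2 * β ^ 2 + β) * F (k - 1) := by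
    intro k hk
    have h1 := step_bound A hrank hn b xstar hstar β hβ (x k) (x (k - 1)) (hs k hk)
    rw [← hrec k hk] at h1
    have h2 : (1 + 3*β + 2*β^2 - (3*β + 1) * alphaVal A b (x k)) *
        sqnorm (A.mulVec (x k - xstar)) ≤ γ₁ * sqnorm (A.mulVec (x k - xstar)) :=
      mul_le_mul_of_nonneg_right (hγ₁ k hk) (sqnorm_nonneg _)
    calc F (k + 1) ≤ _ := h1
      _ ≤ γ₁ * F k + (2 * β ^ 2 + β) * F (k - 1) := by
          rw [hF_def]
          simp only []
          linarith [h2]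
  have hbound := rec_bound F hFnn γ₁ (2 * β ^ 2 + β) hγ₁0 hγ₂0 hF01 hstep q C hq0 hqq hγq hC_def
  constructor
  · exact hbound
  -- convergence
  have hq1 : q < 1 := by
    have hγ₁1 : γ₁ < 1 := by linarith
    have h2 : sD < 2 - γ₁ := by
      rw [hsD_def]
      rw [Real.sqrt_lt' (by linarith)]
      nlinarith
    rw [hq_def]; linarith
  have htend0 : Filter.Tendsto (fun k => q ^ k * C * F 0) Filter.atTop (nhds 0) := by
    have h1 := (tendsto_pow_atTop_nhds_zero_of_lt_one hq0 hq1).mul_const (C * F 0)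
    rw [zero_mul] at h1
    convert h1 using 2 with k
    ring
  have htendF : Filter.Tendsto F Filter.atTop (nhds 0) := by
    rw [← Filter.tendsto_add_atTop_iff_nat 1]
    exact squeeze_zero (fun k => hFnn _) (fun k => hbound k) htend0
  have hσ := sigmaMin_pos A hrank hn
  rw [tendsto_pi_nhds]
  intro j
  have hcoordsq : Filter.Tendsto (fun k => (x k j - xstar j) ^ 2) Filter.atTop (nhds 0) := by
    apply squeeze_zero (fun k => sq_nonneg _) (g := fun k => F k / sigmaMin A ^ 2)
    · intro k
      have h1 : (x k j - xstar j) ^ 2 ≤ sqnorm (x k - xstar) := by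
        rw [sqnorm]
        have := Finset.single_le_sum (f := fun i => (x k - xstar) i ^ 2)
          (fun i _ => sq_nonneg _) (Finset.mem_univ j)
        simpa using this
      have h2 : sigmaMin A ^ 2 * sqnorm (x k - xstar) ≤ F k := le_sqnorm_mulVec A _
      rw [le_div_iff₀ (by positivity)]
      calc (x k j - xstar j) ^ 2 * sigmaMin A ^ 2 ≤ sqnorm (x k - xstar) * sigmaMin A ^ 2 :=
            mul_le_mul_of_nonneg_right h1 (by positivity)
        _ ≤ F k := by linarith
    · have := htendF.div_const (sigmaMin A ^ 2)
      rwa [zero_div] at this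
  have habs : Filter.Tendsto (fun k => x k j - xstar j) Filter.atTop (nhds 0) := by
    rw [tendsto_zero_iff_abs_tendsto_zero]
    have h1 := hcoordsq.sqrt
    rw [Real.sqrt_zero] at h1
    have h2 : (fun k => Real.sqrt ((x k j - xstar j) ^ 2)) =
        fun k => |x k j - xstar j| := by
      funext k; rw [Real.sqrt_sq_eq_abs]
    rw [h2] at h1
    exact h1
  have := habs.add_const (xstar j)
  rw [zero_add] at this
  convert this using 2 with k
  ring
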